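/- Let f(z) = ∑_{j≥1} u_j z^j with commuting indeterminates u_j, and let m, j be nonnegative integers. Then in the formal power series ( (z d/dz)^m (d/dε)^j ( ε^{-1} exp(-ε f(z)) ) |_{ε=1} ) · exp(f(z)), every monomial u_{d_1} u_{d_2} ⋯ u_{d_l} z^{d_1+⋯+d_l} appearing with nonzero coefficient satisfies l ≤ m + j. -/

import Mathlib

/-- The exponential of a formal power series with zero constant term. -/
noncomputable def expPS {R : Type*} [CommRing R] [Algebra ℚ R]
    (g : PowerSeries R) : PowerSeries R :=
  PowerSeries.mk fun n =>
    ∑ m ∈ Finset.range (n + 1), ((m.factorial : ℚ)⁻¹) • PowerSeries.coeff n (g ^ m)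

/-- The series `f(z) = ∑_{j ≥ 1} u_j z^j` in independent indeterminates `u_j`. -/
noncomputable def uSeries : PowerSeries (MvPolynomial ℕ ℚ) :=
  PowerSeries.mk fun j => if j = 0 then 0 else MvPolynomial.X j

/-- The Euler operator `z d/dz` on formal power series. -/
noncomputable def euler {R : Type*} [CommRing R] (g : PowerSeries R) : PowerSeries R :=
  PowerSeries.mk fun n => n • PowerSeries.coeff n g

open PowerSeries Finset

variable {R : Type*} [CommRing R]

lemma coeff_pow_zero_of_lt {g : PowerSeries R} (hg : PowerSeries.constantCoeff g = 0)
    {p n : ℕ} (h : n < p) : PowerSeries.coeff n (g ^ p) = 0 := by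
  have hd : (PowerSeries.X : PowerSeries R) ^ p ∣ g ^ p :=
    pow_dvd_pow_of_dvd (PowerSeries.X_dvd_iff.mpr hg) p
  exact (PowerSeries.X_pow_dvd_iff.mp hd) n h

lemma euler_coeff (g : PowerSeries R) (n : ℕ) :
    PowerSeries.coeff n (euler g) = n • PowerSeries.coeff n g := by
  simp [euler]

lemma euler_mul (A B : PowerSeries R) : euler (A * B) = euler A * B + A * euler B := by
  ext n
  simp only [euler, coeff_mk, map_add, PowerSeries.coeff_mul, coeff_mk, Finset.smul_sum,
    ← Finset.sum_add_distrib]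
  refine Finset.sum_congr rfl fun x hx => ?_
  have hx' : x.1 + x.2 = n := Finset.HasAntidiagonal.mem_antidiagonal.mp hx
  rw [← hx', add_smul, smul_mul_assoc, mul_smul_comm]

lemma euler_one : euler (1 : PowerSeries R) = 0 := by
  ext n
  simp only [euler, coeff_mk, PowerSeries.coeff_one, map_zero]
  split_ifs with h
  · subst h; simp
  · simp

lemma euler_pow_succ (g : PowerSeries R) (p : ℕ) :
    euler (g ^ (p + 1)) = (p + 1) • (g ^ p * euler g) := by
  induction p with
  | zero => simp
  | succ p ih =>
    rw [pow_succ, euler_mul, ih, pow_succ]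
    simp only [nsmul_eq_mul, Nat.cast_add, Nat.cast_one]
    ring

section Exp
variable {S : Type*} [CommRing S] [Algebra ℚ S]

lemma coeff_expPS_of_lt {g : PowerSeries S} (hg : PowerSeries.constantCoeff g = 0)
    {n N : ℕ} (hN : n < N) :
    PowerSeries.coeff n (expPS g) =
      ∑ p ∈ Finset.range N, ((p.factorial : ℚ)⁻¹) • PowerSeries.coeff n (g ^ p) := by
  rw [expPS, coeff_mk]
  refine Finset.sum_subset (Finset.range_subset_range.mpr hN) fun p _ hp => ?_
  have : n < p := by
    have := Finset.mem_range.not.mp hp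
    omega
  rw [coeff_pow_zero_of_lt hg this, smul_zero]

lemma alt_sum_factorial (k : ℕ) :
    ∑ p ∈ Finset.range (k + 1),
        ((p.factorial : ℚ)⁻¹ * (((k - p).factorial : ℚ)⁻¹ * (-1 : ℚ) ^ (k - p))) =
      if k = 0 then 1 else 0 := by
  have h1 : ∀ p ∈ Finset.range (k + 1),
      ((p.factorial : ℚ)⁻¹ * (((k - p).factorial : ℚ)⁻¹ * (-1 : ℚ) ^ (k - p))) =
        (k.factorial : ℚ)⁻¹ * ((k.choose p : ℚ) * (-1 : ℚ) ^ (k - p)) := by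
    intro p hp
    have hpk : p ≤ k := Nat.lt_succ_iff.mp (Finset.mem_range.mp hp)
    have hc : ((k.choose p : ℚ) * p.factorial * (k - p).factorial) = k.factorial := by
      exact_mod_cast congrArg (Nat.cast : ℕ → ℚ) (Nat.choose_mul_factorial_mul_factorial hpk)
    have hp0 : (p.factorial : ℚ) ≠ 0 := Nat.cast_ne_zero.mpr p.factorial_ne_zero
    have hkp0 : ((k - p).factorial : ℚ) ≠ 0 := Nat.cast_ne_zero.mpr (k - p).factorial_ne_zero
    have hk0 : (k.factorial : ℚ) ≠ 0 := Nat.cast_ne_zero.mpr k.factorial_ne_zero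
    field_simp
    linear_combination (-1 : ℚ) * hc
  rw [Finset.sum_congr rfl h1, ← Finset.mul_sum]
  have h2 : ∑ p ∈ Finset.range (k + 1), ((k.choose p : ℚ) * (-1 : ℚ) ^ (k - p)) =
      ∑ i ∈ Finset.range (k + 1), ((-1 : ℚ) ^ i * (k.choose i : ℚ)) := by
    rw [← Finset.sum_range_reflect]
    refine Finset.sum_congr rfl fun i hi => ?_
    have hik : i ≤ k := Nat.lt_succ_iff.mp (Finset.mem_range.mp hi)
    have e1 : k + 1 - 1 - i = k - i := by omega
    have e2 : k - (k - i) = i := by omega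
    rw [e1, Nat.choose_symm hik, e2, mul_comm]
  rw [h2]
  have h3 := Int.alternating_sum_range_choose (n := k)
  have h4 : ((∑ i ∈ Finset.range (k + 1), ((-1 : ℤ) ^ i * (k.choose i : ℤ)) : ℤ) : ℚ) =
      ∑ i ∈ Finset.range (k + 1), ((-1 : ℚ) ^ i * (k.choose i : ℚ)) := by push_cast; rfl
  rw [← h4, h3]
  split_ifs <;> simp <;> omega

end Exp
section Exp2
variable {S : Type*} [CommRing S] [Algebra ℚ S]

lemma expPS_mul_expPS_neg {g : PowerSeries S} (hg : PowerSeries.constantCoeff g = 0) :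
    expPS g * expPS (-g) = 1 := by
  have hg' : PowerSeries.constantCoeff (-g) = 0 := by simp [hg]
  have hneg : ∀ q : ℕ, (-g) ^ q = ((-1 : ℚ) ^ q) • g ^ q := by
    intro q
    rw [show (-g) = ((-1 : ℚ) • g) by rw [neg_one_smul], smul_pow]
  ext n
  rw [PowerSeries.coeff_mul]
  set c : ℕ → ℕ → ℚ := fun p q => (p.factorial : ℚ)⁻¹ * ((q.factorial : ℚ)⁻¹ * (-1 : ℚ) ^ q)
    with hc
  calc
    ∑ x ∈ Finset.HasAntidiagonal.antidiagonal n,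
        PowerSeries.coeff x.1 (expPS g) * PowerSeries.coeff x.2 (expPS (-g))
      = ∑ x ∈ Finset.HasAntidiagonal.antidiagonal n, ∑ y ∈ Finset.range (n+1) ×ˢ Finset.range (n+1),
          (c y.1 y.2) • (PowerSeries.coeff x.1 (g ^ y.1) *
            PowerSeries.coeff x.2 (g ^ y.2)) := by
        refine Finset.sum_congr rfl fun x hx => ?_
        have hx' := Finset.HasAntidiagonal.mem_antidiagonal.mp hx
        rw [coeff_expPS_of_lt hg (show x.1 < n+1 by omega),
          coeff_expPS_of_lt hg' (show x.2 < n+1 by omega), Finset.sum_mul_sum,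
          Finset.sum_product]
        refine Finset.sum_congr rfl fun p _ => Finset.sum_congr rfl fun q _ => ?_
        rw [hneg q, PowerSeries.coeff_smul, hc]
        simp only [smul_eq_mul, Algebra.mul_smul_comm, Algebra.smul_mul_assoc, smul_smul]
        ring_nf
    _ = ∑ y ∈ Finset.range (n+1) ×ˢ Finset.range (n+1),
          (c y.1 y.2) • PowerSeries.coeff n (g ^ (y.1 + y.2)) := by
        rw [Finset.sum_comm]
        refine Finset.sum_congr rfl fun y _ => ?_
        rw [← Finset.smul_sum, ← PowerSeries.coeff_mul, ← pow_add]
    _ = ∑ y ∈ (Finset.range (n+1) ×ˢ Finset.range (n+1)).filter (fun y => y.1 + y.2 ≤ n),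
          (c y.1 y.2) • PowerSeries.coeff n (g ^ (y.1 + y.2)) := by
        refine (Finset.sum_subset (Finset.filter_subset _ _) fun y _ hy => ?_).symm
        have hn : n < y.1 + y.2 := by
          by_contra h
          exact hy (Finset.mem_filter.mpr ⟨by assumption, by omega⟩)
        rw [coeff_pow_zero_of_lt hg hn, smul_zero]
    _ = ∑ z ∈ (Finset.range (n+1)).sigma (fun k => Finset.range (k+1)),
          (c z.2 (z.1 - z.2)) • PowerSeries.coeff n (g ^ z.1) := by
        refine Finset.sum_nbij' (fun y => (⟨y.1 + y.2, y.1⟩ : Σ _ : ℕ, ℕ))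
          (fun z => (z.2, z.1 - z.2)) ?_ ?_ ?_ ?_ ?_
        · intro y hy
          simp only [Finset.mem_filter, Finset.mem_product, Finset.mem_range] at hy
          simp only [Finset.mem_sigma, Finset.mem_range]
          omega
        · intro z hz
          simp only [Finset.mem_sigma, Finset.mem_range] at hz
          simp only [Finset.mem_filter, Finset.mem_product, Finset.mem_range]
          omega
        · intro y hy
          simp
        · intro z hz
          obtain ⟨k, p⟩ := z
          simp only [Finset.mem_sigma, Finset.mem_range] at hz
          have hpk : p + (k - p) = k := by omega
          simp [hpk]
        · intro y hy
          simp only [Nat.add_sub_cancel_left]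
    _ = ∑ k ∈ Finset.range (n+1), ∑ p ∈ Finset.range (k+1),
          (c p (k - p)) • PowerSeries.coeff n (g ^ k) := by
        rw [Finset.sum_sigma]
    _ = ∑ k ∈ Finset.range (n+1),
          (if k = 0 then (1:ℚ) else 0) • PowerSeries.coeff n (g ^ k) := by
        refine Finset.sum_congr rfl fun k _ => ?_
        rw [← Finset.sum_smul, hc]
        rw [alt_sum_factorial k]
    _ = PowerSeries.coeff n 1 := by
        simp [ite_smul]

end Exp2
section Exp3
variable {S : Type*} [CommRing S] [Algebra ℚ S]

lemma coeff_euler_mul_pow_self {g : PowerSeries S} (hg : PowerSeries.constantCoeff g = 0)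
    (n : ℕ) : PowerSeries.coeff n (euler g * g ^ n) = 0 := by
  rw [PowerSeries.coeff_mul]
  refine Finset.sum_eq_zero fun x hx => ?_
  have hx' := Finset.HasAntidiagonal.mem_antidiagonal.mp hx
  rcases lt_or_ge x.2 n with h | h
  · rw [coeff_pow_zero_of_lt hg h, mul_zero]
  · have h1 : x.1 = 0 := by omega
    rw [h1, euler_coeff, zero_smul, zero_mul]

lemma euler_expPS {g : PowerSeries S} (hg : PowerSeries.constantCoeff g = 0) :
    euler (expPS g) = euler g * expPS g := by
  ext n
  have lhs : PowerSeries.coeff n (euler (expPS g)) =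
      ∑ p ∈ Finset.range n, (p.factorial : ℚ)⁻¹ •
        PowerSeries.coeff n (g ^ p * euler g) := by
    rw [euler_coeff, coeff_expPS_of_lt hg (Nat.lt_succ_self n), Finset.smul_sum]
    have e1 : ∀ p, n • ((p.factorial : ℚ)⁻¹ • PowerSeries.coeff n (g ^ p)) =
        (p.factorial : ℚ)⁻¹ • PowerSeries.coeff n (euler (g ^ p)) := by
      intro p
      rw [euler_coeff, smul_comm]
    simp only [e1]
    rw [Finset.sum_range_succ']
    have e0 : (Nat.factorial 0 : ℚ)⁻¹ • PowerSeries.coeff n (euler (g ^ 0)) = 0 := by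
      simp [euler_one]
    rw [e0, add_zero]
    refine Finset.sum_congr rfl fun p _ => ?_
    rw [euler_pow_succ, map_nsmul]
    have hfac : (((p+1 : ℕ)) : ℚ) * ((p + 1).factorial : ℚ)⁻¹ = (p.factorial : ℚ)⁻¹ := by
      have h1 : ((p : ℚ) + 1) ≠ 0 := by positivity
      have h2 : (p.factorial : ℚ) ≠ 0 := Nat.cast_ne_zero.mpr p.factorial_ne_zero
      rw [Nat.factorial_succ]
      push_cast
      field_simp
    rw [← Nat.cast_smul_eq_nsmul ℚ, smul_smul, mul_comm, hfac]
  rw [lhs, PowerSeries.coeff_mul]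
  have rhs1 : ∀ x ∈ Finset.HasAntidiagonal.antidiagonal n,
      PowerSeries.coeff x.1 (euler g) * PowerSeries.coeff x.2 (expPS g) =
      ∑ q ∈ Finset.range (n+1), (q.factorial : ℚ)⁻¹ •
        (PowerSeries.coeff x.1 (euler g) * PowerSeries.coeff x.2 (g ^ q)) := by
    intro x hx
    have hx' := Finset.HasAntidiagonal.mem_antidiagonal.mp hx
    rw [coeff_expPS_of_lt hg (show x.2 < n+1 by omega), Finset.mul_sum]
    refine Finset.sum_congr rfl fun q _ => ?_
    rw [mul_smul_comm]
  rw [Finset.sum_congr rfl rhs1, Finset.sum_comm]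
  have rhs2 : ∀ q, ∑ x ∈ Finset.HasAntidiagonal.antidiagonal n, (q.factorial : ℚ)⁻¹ •
      (PowerSeries.coeff x.1 (euler g) * PowerSeries.coeff x.2 (g ^ q)) =
      (q.factorial : ℚ)⁻¹ • PowerSeries.coeff n (euler g * g ^ q) := by
    intro q
    rw [← Finset.smul_sum, ← PowerSeries.coeff_mul]
  simp only [rhs2]
  rw [Finset.sum_range_succ, coeff_euler_mul_pow_self hg, smul_zero, add_zero]
  refine (Finset.sum_congr rfl fun p _ => ?_).symm
  rw [mul_comm]

end Exp3
section Len

abbrev MvP := MvPolynomial ℕ ℚ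

/-- Every monomial in every coefficient of `g` has length (total `u`-degree) at most `L`. -/
def LenLe (L : ℕ) (g : PowerSeries MvP) : Prop :=
  ∀ (n : ℕ) (e : ℕ →₀ ℕ),
    MvPolynomial.coeff e (PowerSeries.coeff n g) ≠ 0 → e.sum (fun _ k => k) ≤ L

lemma LenLe.mono {L L' : ℕ} {g : PowerSeries MvP} (h : LenLe L g) (hLL : L ≤ L') :
    LenLe L' g := fun n e he => le_trans (h n e he) hLL

lemma lenLe_one : LenLe 0 (1 : PowerSeries MvP) := by
  intro n e he
  rw [PowerSeries.coeff_one] at he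
  split_ifs at he with h
  · rcases eq_or_ne e 0 with rfl | h0
    · simp
    · rw [MvPolynomial.coeff_one, if_neg (by simpa using h0.symm)] at he
      exact absurd rfl he
  · simp at he

lemma lenLe_add {L : ℕ} {g h : PowerSeries MvP} (hg : LenLe L g) (hh : LenLe L h) :
    LenLe L (g + h) := by
  intro n e he
  rw [map_add, MvPolynomial.coeff_add] at he
  rcases (by by_contra hc; push_neg at hc; rw [hc.1, hc.2] at he; simp at he :
      MvPolynomial.coeff e (PowerSeries.coeff n g) ≠ 0 ∨
      MvPolynomial.coeff e (PowerSeries.coeff n h) ≠ 0) with h1 | h1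
  · exact hg n e h1
  · exact hh n e h1

lemma lenLe_smul {L : ℕ} {g : PowerSeries MvP} (a : ℚ) (hg : LenLe L g) :
    LenLe L (a • g) := by
  intro n e he
  rw [PowerSeries.coeff_smul, MvPolynomial.coeff_smul] at he
  exact hg n e fun hz => he (by rw [hz, smul_zero])

lemma lenLe_neg {L : ℕ} {g : PowerSeries MvP} (hg : LenLe L g) : LenLe L (-g) := by
  intro n e he
  rw [map_neg, MvPolynomial.coeff_neg, neg_ne_zero] at he
  exact hg n e he

lemma lenLe_sum {L : ℕ} {ι : Type*} (s : Finset ι) (f : ι → PowerSeries MvP)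
    (hf : ∀ i ∈ s, LenLe L (f i)) : LenLe L (∑ i ∈ s, f i) := by
  classical
  induction s using Finset.induction_on with
  | empty =>
    intro n e he
    simp at he
  | insert _ _ hnot ih =>
    rw [Finset.sum_insert hnot]
    exact lenLe_add (hf _ (Finset.mem_insert_self _ _))
      (ih fun i hi => hf i (Finset.mem_insert_of_mem hi))

lemma lenLe_mul {L1 L2 : ℕ} {g h : PowerSeries MvP} (hg : LenLe L1 g) (hh : LenLe L2 h) :
    LenLe (L1 + L2) (g * h) := by
  intro n e he
  rw [PowerSeries.coeff_mul] at he
  obtain ⟨x, _, hx⟩ := Finset.exists_ne_zero_of_sum_ne_zero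
    (by simpa [MvPolynomial.coeff_sum] using he)
  rw [MvPolynomial.coeff_mul] at hx
  obtain ⟨d, hd, hdne⟩ := Finset.exists_ne_zero_of_sum_ne_zero hx
  have hd' : d.1 + d.2 = e := (Finset.HasAntidiagonal.mem_antidiagonal.mp hd)
  have h1 : MvPolynomial.coeff d.1 (PowerSeries.coeff x.1 g) ≠ 0 :=
    fun hz => hdne (by rw [hz, zero_mul])
  have h2 : MvPolynomial.coeff d.2 (PowerSeries.coeff x.2 h) ≠ 0 :=
    fun hz => hdne (by rw [hz, mul_zero])
  have hsum : e.sum (fun _ k => k) = d.1.sum (fun _ k => k) + d.2.sum (fun _ k => k) := by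
    rw [← hd']
    exact Finsupp.sum_add_index' (fun _ => rfl) (fun _ _ _ => rfl)
  rw [hsum]
  exact add_le_add (hg _ _ h1) (hh _ _ h2)

lemma lenLe_pow {L : ℕ} {g : PowerSeries MvP} (hg : LenLe L g) (p : ℕ) :
    LenLe (p * L) (g ^ p) := by
  induction p with
  | zero => simpa using lenLe_one
  | succ p ih =>
    rw [pow_succ, add_mul, one_mul]
    exact lenLe_mul ih hg

lemma lenLe_euler {L : ℕ} {g : PowerSeries MvP} (hg : LenLe L g) : LenLe L (euler g) := by
  intro n e he
  rw [euler_coeff, MvPolynomial.coeff_smul] at he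
  exact hg n e fun hz => he (by rw [hz, smul_zero])

lemma lenLe_uSeries : LenLe 1 uSeries := by
  intro n e he
  rw [uSeries, PowerSeries.coeff_mk] at he
  split_ifs at he with h
  · simp at he
  · rw [MvPolynomial.coeff_X'] at he
    split_ifs at he with h2
    · rw [← h2, Finsupp.sum_single_index]
      rfl
    · simp at he

lemma constantCoeff_uSeries : PowerSeries.constantCoeff uSeries = 0 := by
  rw [← PowerSeries.coeff_zero_eq_constantCoeff_apply, uSeries, PowerSeries.coeff_mk]
  simp

end Len
section Main

lemma constantCoeff_neg_uSeries : PowerSeries.constantCoeff (-uSeries) = 0 := by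
  rw [map_neg, constantCoeff_uSeries, neg_zero]

lemma lenLe_euler_neg_uSeries : LenLe 1 (euler (-uSeries)) :=
  lenLe_euler (lenLe_neg lenLe_uSeries)

lemma key_iterate (m : ℕ) : ∀ (L : ℕ) (T : PowerSeries MvP), LenLe L T →
    ∃ T' : PowerSeries MvP,
      euler^[m] (T * expPS (-uSeries)) = T' * expPS (-uSeries) ∧ LenLe (L + m) T' := by
  induction m with
  | zero => exact fun L T hT => ⟨T, rfl, hT⟩
  | succ m ih =>
    intro L T hT
    obtain ⟨T', hEq, hLen⟩ := ih L T hT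
    refine ⟨euler T' + T' * euler (-uSeries), ?_, ?_⟩
    · rw [Function.iterate_succ_apply', hEq, euler_mul,
        euler_expPS constantCoeff_neg_uSeries]
      ring
    · have h1 : LenLe (L + m + 1) (euler T') := (lenLe_euler hLen).mono (by omega)
      have h2 : LenLe (L + m + 1) (T' * euler (-uSeries)) :=
        lenLe_mul hLen lenLe_euler_neg_uSeries
      have := lenLe_add h1 h2
      simpa [Nat.add_assoc] using this

/-- In `((z d/dz)^m (d/dε)^j (ε⁻¹ exp(-ε f(z)))|_{ε=1}) · exp(f(z))`, where by the
Leibniz rule `(d/dε)^j (ε⁻¹ e^{-εf})|_{ε=1} = (∑_{i=0}^{j} C(j,i)(-1)^i i! (-f)^{j-i}) e^{-f}`,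
every monomial `u_{d_1} ⋯ u_{d_l} z^{d_1+⋯+d_l}` of length `l ≥ m + j + 1`
has vanishing coefficient. -/
theorem long_monomials_vanish (m j : ℕ) :
    ∀ e : ℕ →₀ ℕ, e 0 = 0 → m + j + 1 ≤ e.sum (fun _ k => k) →
      MvPolynomial.coeff e
        (PowerSeries.coeff (e.sum fun i k => i * k)
          (euler^[m]
              ((∑ i ∈ Finset.range (j + 1),
                  ((j.choose i : ℚ) * (-1 : ℚ) ^ i * (i.factorial : ℚ)) •
                    (-uSeries) ^ (j - i)) *
                expPS (-uSeries)) *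
            expPS uSeries)) = 0 := by
  intro e he0 hlen
  set T : PowerSeries MvP := ∑ i ∈ Finset.range (j + 1),
      ((j.choose i : ℚ) * (-1 : ℚ) ^ i * (i.factorial : ℚ)) • (-uSeries) ^ (j - i) with hT
  have hTlen : LenLe j T := by
    refine lenLe_sum _ _ fun i _ => lenLe_smul _ ?_
    have := lenLe_pow (lenLe_neg lenLe_uSeries) (j - i)
    exact this.mono (by omega)
  obtain ⟨T', hEq, hLen⟩ := key_iterate m j T hTlen
  rw [hEq, mul_assoc]
  have hexp : expPS (-uSeries) * expPS uSeries = 1 := by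
    have := expPS_mul_expPS_neg (g := -uSeries) constantCoeff_neg_uSeries
    rwa [neg_neg] at this
  rw [hexp, mul_one]
  by_contra hne
  have := hLen _ _ hne
  omega

end Main
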